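/- For the bi-objective problem OJZR with f1 = OneJump_k and f2 = ZeroRoyalRoad on bit-strings of length n = b·ℓ, where b > 1, k is an integer with 1 < k < n/2 and ℓ < k, the set of non-global Pareto local optima equals exactly { x : |x|_1 = n−k and the number of all-zeros blocks of x is strictly less than ⌊k/ℓ⌋ }. -/

import Mathlib

open Finset

/-- Number of one-bits of a bit-string. -/
def onesCount {n : ℕ} (x : Fin n → Bool) : ℕ :=
  (Finset.univ.filter fun i => x i = true).card

/-- Number of zero-bits of a bit-string. -/
def zerosCount {n : ℕ} (x : Fin n → Bool) : ℕ :=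
  (Finset.univ.filter fun i => x i = false).card

/-- Number of leading one-bits. -/
def leadingOnes {n : ℕ} (x : Fin n → Bool) : ℕ :=
  (Finset.univ.filter fun i : Fin n => ∀ j : Fin n, j ≤ i → x j = true).card

/-- Number of trailing zero-bits. -/
def trailingZeroes {n : ℕ} (x : Fin n → Bool) : ℕ :=
  (Finset.univ.filter fun i : Fin n => ∀ j : Fin n, i ≤ j → x j = false).card

/-- `y` dominates `x` for the bi-objective maximisation problem `(f1, f2)`. -/
def dominates {n : ℕ} (f1 f2 : (Fin n → Bool) → ℕ) (y x : Fin n → Bool) : Prop :=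
  f1 x ≤ f1 y ∧ f2 x ≤ f2 y ∧ (f1 x < f1 y ∨ f2 x < f2 y)

/-- `x` is Pareto optimal: no solution dominates it. -/
def paretoOptimal {n : ℕ} (f1 f2 : (Fin n → Bool) → ℕ) (x : Fin n → Bool) : Prop :=
  ∀ y, ¬ dominates f1 f2 y x

/-- `x` is a non-global Pareto local optimum: not Pareto optimal, and not dominated by
any bit-string at Hamming distance exactly 1. -/
def nonGlobalParetoLocalOpt {n : ℕ} (f1 f2 : (Fin n → Bool) → ℕ) (x : Fin n → Bool) : Prop :=
  ¬ paretoOptimal f1 f2 x ∧ ∀ y, hammingDist y x = 1 → ¬ dominates f1 f2 y x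

/-- The ZeroJump function with jump parameter `k`. -/
def zeroJump (n k : ℕ) (x : Fin n → Bool) : ℕ :=
  if zerosCount x ≤ n - k ∨ x = (fun _ => false) then k + zerosCount x else n - zerosCount x

/-- The OneJump function with jump parameter `k`. -/
def oneJump (n k : ℕ) (x : Fin n → Bool) : ℕ :=
  if onesCount x ≤ n - k ∨ x = (fun _ => true) then k + onesCount x else n - onesCount x

/-- Block `j` (0-indexed) of the bit-string `x` (with `b` blocks of length `ℓ`) is all-ones. -/
def blockAllOnes (b ℓ : ℕ) (x : Fin (b * ℓ) → Bool) (j : Fin b) : Prop :=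
  ∀ i : Fin (b * ℓ), (i : ℕ) / ℓ = (j : ℕ) → x i = true

/-- Block `j` (0-indexed) of the bit-string `x` is all-zeros. -/
def blockAllZeros (b ℓ : ℕ) (x : Fin (b * ℓ) → Bool) (j : Fin b) : Prop :=
  ∀ i : Fin (b * ℓ), (i : ℕ) / ℓ = (j : ℕ) → x i = false

instance (b ℓ : ℕ) (x : Fin (b * ℓ) → Bool) (j : Fin b) : Decidable (blockAllOnes b ℓ x j) := by
  unfold blockAllOnes; infer_instance

instance (b ℓ : ℕ) (x : Fin (b * ℓ) → Bool) (j : Fin b) : Decidable (blockAllZeros b ℓ x j) := by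
  unfold blockAllZeros; infer_instance

/-- OneRoyalRoad: `ℓ` times the number of all-ones blocks. -/
def oneRoyalRoad (b ℓ : ℕ) (x : Fin (b * ℓ) → Bool) : ℕ :=
  ℓ * (Finset.univ.filter fun j : Fin b => blockAllOnes b ℓ x j).card

/-- ZeroRoyalRoad: `ℓ` times the number of all-zeros blocks. -/
def zeroRoyalRoad (b ℓ : ℕ) (x : Fin (b * ℓ) → Bool) : ℕ :=
  ℓ * (Finset.univ.filter fun j : Fin b => blockAllZeros b ℓ x j).card

/-- Number of one-bits in block `j` of `x`. -/
def blockOnes (b ℓ : ℕ) (x : Fin (b * ℓ) → Bool) (j : Fin b) : ℕ :=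
  (Finset.univ.filter fun i : Fin (b * ℓ) => (i : ℕ) / ℓ = (j : ℕ) ∧ x i = true).card

/-- Number of zero-bits in block `j` of `x`. -/
def blockZeros (b ℓ : ℕ) (x : Fin (b * ℓ) → Bool) (j : Fin b) : ℕ :=
  (Finset.univ.filter fun i : Fin (b * ℓ) => (i : ℕ) / ℓ = (j : ℕ) ∧ x i = false).card

namespace OJZRaux

lemma ones_add_zeros {n : ℕ} (x : Fin n → Bool) : onesCount x + zerosCount x = n := by
  classical
  have h := Finset.card_filter_add_card_filter_not
      (s := (Finset.univ : Finset (Fin n))) (p := fun i => x i = true)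
  simpa [onesCount, zerosCount, Bool.not_eq_true] using h

lemma onesCount_le {n : ℕ} (x : Fin n → Bool) : onesCount x ≤ n := by
  have := ones_add_zeros x; omega

lemma onesCount_eq_n_iff {n : ℕ} (x : Fin n → Bool) :
    onesCount x = n ↔ x = fun _ => true := by
  constructor
  · intro h
    have hu : (Finset.univ.filter fun i => x i = true) = (Finset.univ : Finset (Fin n)) :=
      Finset.eq_univ_of_card _ (by simpa [Fintype.card_fin, onesCount] using h)
    funext i
    have hi : i ∈ Finset.univ.filter fun i => x i = true := by
      rw [hu]; exact Finset.mem_univ i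
    exact (Finset.mem_filter.mp hi).2
  · rintro rfl; simp [onesCount]

lemma onesCount_update_true {n : ℕ} (x : Fin n → Bool) (i : Fin n) (h : x i = false) :
    onesCount (Function.update x i true) = onesCount x + 1 := by
  classical
  unfold onesCount
  have hset : (Finset.univ.filter fun j => Function.update x i true j = true)
      = insert i (Finset.univ.filter fun j => x j = true) := by
    ext j
    by_cases hj : j = i
    · subst hj; simp [Function.update_self]
    · simp [Function.update_of_ne hj, hj]
  rw [hset, Finset.card_insert_of_notMem (by simp [h])]

lemma onesCount_update_false {n : ℕ} (x : Fin n → Bool) (i : Fin n) (h : x i = true) :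
    onesCount x = onesCount (Function.update x i false) + 1 := by
  classical
  unfold onesCount
  have hset : (Finset.univ.filter fun j => x j = true)
      = insert i (Finset.univ.filter fun j => Function.update x i false j = true) := by
    ext j
    by_cases hj : j = i
    · subst hj; simp [h]
    · simp [Function.update_of_ne hj, hj]
  rw [hset, Finset.card_insert_of_notMem (by simp [Function.update_self])]

lemma hammingDist_update {n : ℕ} (x : Fin n → Bool) (i : Fin n) (c : Bool) (h : c ≠ x i) :
    hammingDist (Function.update x i c) x = 1 := by
  classical
  have hset : (Finset.univ.filter fun j => Function.update x i c j ≠ x j) = {i} := by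
    ext j
    by_cases hj : j = i
    · subst hj; simp [Function.update_self, h]
    · simp [Function.update_of_ne hj, hj]
  simp only [hammingDist]
  rw [show ({j | Function.update x i c j ≠ x j} : Finset (Fin n))
      = Finset.univ.filter fun j => Function.update x i c j ≠ x j from rfl, hset]
  simp

lemma exists_update_of_hammingDist_one {n : ℕ} {x y : Fin n → Bool}
    (h : hammingDist y x = 1) : ∃ i, y i ≠ x i ∧ y = Function.update x i (y i) := by
  classical
  have hc : (Finset.univ.filter fun j => y j ≠ x j).card = 1 := by
    simpa [hammingDist] using h
  obtain ⟨i, hi⟩ := Finset.card_eq_one.mp hc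
  have hmem : i ∈ Finset.univ.filter fun j => y j ≠ x j := by rw [hi]; simp
  refine ⟨i, (Finset.mem_filter.mp hmem).2, ?_⟩
  funext j
  by_cases hj : j = i
  · subst hj; simp [Function.update_self]
  · have hnm : j ∉ Finset.univ.filter fun j => y j ≠ x j := by rw [hi]; simp [hj]
    simp only [Finset.mem_filter, Finset.mem_univ, true_and, not_not] at hnm
    rw [Function.update_of_ne hj]; exact hnm

lemma oneJump_le {n k : ℕ} (x : Fin n → Bool) (h : onesCount x ≤ n - k) :
    oneJump n k x = k + onesCount x := by
  unfold oneJump; rw [if_pos (Or.inl h)]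

lemma oneJump_gt {n k : ℕ} (x : Fin n → Bool) (h1 : ¬ onesCount x ≤ n - k)
    (h2 : x ≠ fun _ => true) : oneJump n k x = n - onesCount x := by
  unfold oneJump; rw [if_neg (by tauto)]

lemma oneJump_all_ones {n k : ℕ} : oneJump n k (fun _ : Fin n => true) = k + n := by
  unfold oneJump
  rw [if_pos (Or.inr rfl)]
  congr 1
  exact (onesCount_eq_n_iff _).mpr rfl

lemma div_eq_iff_block {ℓ i j : ℕ} (hℓ : 0 < ℓ) :
    i / ℓ = j ↔ j * ℓ ≤ i ∧ i < (j + 1) * ℓ := by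
  constructor
  · rintro rfl
    exact ⟨Nat.div_mul_le_self _ _, (Nat.div_lt_iff_lt_mul hℓ).1 (Nat.lt_succ_self _)⟩
  · rintro ⟨h1, h2⟩; exact Nat.div_eq_of_lt_le h1 h2

lemma card_val_lt {N : ℕ} (m : ℕ) (h : m ≤ N) :
    ((Finset.univ : Finset (Fin N)).filter fun i : Fin N => (i : ℕ) < m).card = m := by
  have key : ((Finset.univ : Finset (Fin N)).filter fun i : Fin N => (i : ℕ) < m).card
      = (Finset.univ : Finset (Fin m)).card := Finset.card_bij'
    (fun i hi => (⟨(i : ℕ), (Finset.mem_filter.mp hi).2⟩ : Fin m))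
    (fun t _ => (⟨(t : ℕ), lt_of_lt_of_le t.isLt h⟩ : Fin N))
    (fun i hi => Finset.mem_univ _)
    (fun t ht => by simp [t.isLt])
    (fun i hi => rfl) (fun t ht => rfl)
  rw [key]; simp

lemma block_card {b ℓ : ℕ} (hℓ : 0 < ℓ) (j : ℕ) (hj : j < b) :
    ((Finset.univ : Finset (Fin (b * ℓ))).filter fun i : Fin (b * ℓ) => (i : ℕ) / ℓ = j).card = ℓ := by
  have hb1 : ∀ t : Fin ℓ, j * ℓ + (t : ℕ) < b * ℓ := by
    intro t
    have h1 : j * ℓ + (t : ℕ) < (j + 1) * ℓ := by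
      have := t.isLt; rw [Nat.succ_mul]; omega
    exact lt_of_lt_of_le h1 (Nat.mul_le_mul_right ℓ hj)
  have key : ((Finset.univ : Finset (Fin (b * ℓ))).filter
      fun i : Fin (b * ℓ) => (i : ℕ) / ℓ = j).card
      = (Finset.univ : Finset (Fin ℓ)).card := ?_
  · rw [key]; simp
  refine Finset.card_bij'
    (fun i hi => (⟨(i : ℕ) - j * ℓ, ?_⟩ : Fin ℓ))
    (fun t _ => (⟨j * ℓ + (t : ℕ), hb1 t⟩ : Fin (b * ℓ)))
    (fun i hi => Finset.mem_univ _) ?_ ?_ ?_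
  · have hd := (Finset.mem_filter.mp hi).2
    have := (div_eq_iff_block hℓ).1 hd
    rw [Nat.succ_mul] at this; omega
  · intro t _
    simp only [Finset.mem_filter, Finset.mem_univ, true_and]
    apply (div_eq_iff_block hℓ).2
    have := t.isLt
    constructor
    · omega
    · rw [Nat.succ_mul]; omega
  · intro i hi
    have hd := (Finset.mem_filter.mp hi).2
    have := (div_eq_iff_block hℓ).1 hd
    apply Fin.ext; simp; omega
  · intro t _; apply Fin.ext; simp

lemma mul_card_zero_blocks_le (b ℓ : ℕ) (hℓ : 0 < ℓ) (x : Fin (b * ℓ) → Bool) :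
    ℓ * (Finset.univ.filter fun j : Fin b => blockAllZeros b ℓ x j).card ≤ zerosCount x := by
  classical
  set Z := Finset.univ.filter fun j : Fin b => blockAllZeros b ℓ x j with hZ
  have hdisj : ∀ j1 ∈ Z, ∀ j2 ∈ Z, j1 ≠ j2 →
      Disjoint ((Finset.univ : Finset (Fin (b * ℓ))).filter fun i : Fin (b * ℓ) => (i : ℕ) / ℓ = (j1 : ℕ))
               ((Finset.univ : Finset (Fin (b * ℓ))).filter fun i : Fin (b * ℓ) => (i : ℕ) / ℓ = (j2 : ℕ)) := by
    intro j1 _ j2 _ hne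
    rw [Finset.disjoint_left]
    intro i h1 h2
    simp only [Finset.mem_filter, Finset.mem_univ, true_and] at h1 h2
    exact hne (Fin.ext (by rw [← h1, h2]))
  have hcard : (Z.biUnion fun j =>
      (Finset.univ : Finset (Fin (b * ℓ))).filter fun i : Fin (b * ℓ) => (i : ℕ) / ℓ = (j : ℕ)).card
      = ℓ * Z.card := by
    rw [Finset.card_biUnion hdisj]
    have hsc : ∀ j ∈ Z, ((Finset.univ : Finset (Fin (b * ℓ))).filter
        fun i : Fin (b * ℓ) => (i : ℕ) / ℓ = (j : ℕ)).card = ℓ :=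
      fun j _ => block_card hℓ (j : ℕ) j.isLt
    rw [Finset.sum_congr rfl hsc]
    simp [Nat.mul_comm]
  have hsub : (Z.biUnion fun j =>
      (Finset.univ : Finset (Fin (b * ℓ))).filter fun i : Fin (b * ℓ) => (i : ℕ) / ℓ = (j : ℕ))
      ⊆ Finset.univ.filter fun i : Fin (b * ℓ) => x i = false := by
    intro i hi
    simp only [Finset.mem_biUnion, Finset.mem_filter, Finset.mem_univ, true_and] at hi ⊢
    obtain ⟨j, hj, hij⟩ := hi
    have hz : blockAllZeros b ℓ x j := by
      have := Finset.mem_filter.mp (hZ ▸ hj); exact this.2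
    exact hz i hij
  calc ℓ * Z.card = _ := hcard.symm
    _ ≤ _ := Finset.card_le_card hsub

lemma zeros_le_of_all (b ℓ : ℕ) (hℓ : 0 < ℓ) (x : Fin (b * ℓ) → Bool)
    (hall : ∀ i : Fin (b * ℓ), x i = false →
      ∃ j : Fin b, (i : ℕ) / ℓ = (j : ℕ) ∧ blockAllZeros b ℓ x j) :
    zerosCount x ≤ ℓ * (Finset.univ.filter fun j : Fin b => blockAllZeros b ℓ x j).card := by
  classical
  set Z := Finset.univ.filter fun j : Fin b => blockAllZeros b ℓ x j with hZ
  have hdisj : ∀ j1 ∈ Z, ∀ j2 ∈ Z, j1 ≠ j2 →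
      Disjoint ((Finset.univ : Finset (Fin (b * ℓ))).filter fun i : Fin (b * ℓ) => (i : ℕ) / ℓ = (j1 : ℕ))
               ((Finset.univ : Finset (Fin (b * ℓ))).filter fun i : Fin (b * ℓ) => (i : ℕ) / ℓ = (j2 : ℕ)) := by
    intro j1 _ j2 _ hne
    rw [Finset.disjoint_left]
    intro i h1 h2
    simp only [Finset.mem_filter, Finset.mem_univ, true_and] at h1 h2
    exact hne (Fin.ext (by rw [← h1, h2]))
  have hcard : (Z.biUnion fun j =>
      (Finset.univ : Finset (Fin (b * ℓ))).filter fun i : Fin (b * ℓ) => (i : ℕ) / ℓ = (j : ℕ)).card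
      = ℓ * Z.card := by
    rw [Finset.card_biUnion hdisj]
    have hsc : ∀ j ∈ Z, ((Finset.univ : Finset (Fin (b * ℓ))).filter
        fun i : Fin (b * ℓ) => (i : ℕ) / ℓ = (j : ℕ)).card = ℓ :=
      fun j _ => block_card hℓ (j : ℕ) j.isLt
    rw [Finset.sum_congr rfl hsc]
    simp [Nat.mul_comm]
  have hsub : (Finset.univ.filter fun i : Fin (b * ℓ) => x i = false)
      ⊆ Z.biUnion fun j =>
        (Finset.univ : Finset (Fin (b * ℓ))).filter fun i : Fin (b * ℓ) => (i : ℕ) / ℓ = (j : ℕ) := by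
    intro i hi
    simp only [Finset.mem_biUnion, Finset.mem_filter, Finset.mem_univ, true_and] at hi ⊢
    obtain ⟨j, hij, hj⟩ := hall i hi
    exact ⟨j, by simp [hZ, hj], hij⟩
  calc zerosCount x ≤ _ := Finset.card_le_card hsub
    _ = ℓ * Z.card := hcard

lemma zrr_mono (b ℓ : ℕ) {x y : Fin (b * ℓ) → Bool}
    (h : ∀ i, x i = false → y i = false) :
    zeroRoyalRoad b ℓ x ≤ zeroRoyalRoad b ℓ y := by
  unfold zeroRoyalRoad
  apply Nat.mul_le_mul_left
  apply Finset.card_le_card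
  intro j hj
  simp only [Finset.mem_filter, Finset.mem_univ, true_and] at hj ⊢
  intro i hi
  exact h i (hj i hi)

lemma zrr_update_true (b ℓ : ℕ) (x : Fin (b * ℓ) → Bool) (i : Fin (b * ℓ)) (j0 : Fin b)
    (hij : (i : ℕ) / ℓ = (j0 : ℕ)) (hnb : ¬ blockAllZeros b ℓ x j0) :
    zeroRoyalRoad b ℓ (Function.update x i true) = zeroRoyalRoad b ℓ x := by
  classical
  unfold zeroRoyalRoad
  congr 2
  ext j
  simp only [Finset.mem_filter, Finset.mem_univ, true_and]
  by_cases hj : j = j0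
  · subst hj
    constructor
    · intro h
      exact absurd (h i hij) (by simp [Function.update_self])
    · intro h; exact absurd h hnb
  · have hne : ∀ i' : Fin (b * ℓ), (i' : ℕ) / ℓ = (j : ℕ) → i' ≠ i := by
      intro i' hi' he
      subst he
      exact hj (Fin.ext (by rw [← hi', hij]))
    constructor <;> intro h i' hi'
    · have := h i' hi'
      rwa [Function.update_of_ne (hne i' hi')] at this
    · rw [Function.update_of_ne (hne i' hi')]
      exact h i' hi'

lemma zrr_all_ones (b ℓ : ℕ) (hℓ : 0 < ℓ) :
    zeroRoyalRoad b ℓ (fun _ => true) = 0 := by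
  unfold zeroRoyalRoad
  simp only [Nat.mul_eq_zero, Finset.card_eq_zero, Finset.filter_eq_empty_iff]
  right
  intro j _ hz
  have hjl : (j : ℕ) * ℓ < b * ℓ := (Nat.mul_lt_mul_right hℓ).2 j.isLt
  have := hz ⟨(j : ℕ) * ℓ, hjl⟩ (by simp [Nat.mul_div_cancel _ hℓ])
  simp at this

lemma zrr_le_zeros (b ℓ : ℕ) (hℓ : 0 < ℓ) (x : Fin (b * ℓ) → Bool) :
    zeroRoyalRoad b ℓ x ≤ zerosCount x :=
  mul_card_zero_blocks_le b ℓ hℓ x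

lemma sum_bound (b ℓ k : ℕ) (hk : 0 < k) (hℓ : 0 < ℓ) (hkn : 2 * k < b * ℓ)
    (y : Fin (b * ℓ) → Bool) :
    oneJump (b * ℓ) k y + zeroRoyalRoad b ℓ y ≤ b * ℓ + k := by
  by_cases h1 : y = fun _ => true
  · subst h1
    rw [oneJump_all_ones, zrr_all_ones b ℓ hℓ]
    omega
  · have hz := zrr_le_zeros b ℓ hℓ y
    have hoz := ones_add_zeros y
    by_cases h2 : onesCount y ≤ b * ℓ - k
    · rw [oneJump_le y h2]; omega
    · rw [oneJump_gt y h2 h1]; omega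

end OJZRaux

open OJZRaux in
/-- For OJZR with b > 1, 1 < k < n/2 and ℓ < k, the non-global Pareto local
optima are exactly the bit-strings x with |x|_1 = n-k and strictly fewer than ⌊k/ℓ⌋
all-zeros blocks. -/
theorem OJZR_local_opts (b ℓ k : ℕ) (hb : 1 < b) (hk : 1 < k) (hkn : 2 * k < b * ℓ)
    (hℓk : ℓ < k) (x : Fin (b * ℓ) → Bool) :
    nonGlobalParetoLocalOpt (oneJump (b * ℓ) k) (zeroRoyalRoad b ℓ) x ↔
      onesCount x = b * ℓ - k ∧
        (Finset.univ.filter fun j : Fin b => blockAllZeros b ℓ x j).card < k / ℓ := by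
  classical
  have hℓ : 0 < ℓ := by
    rcases Nat.eq_zero_or_pos ℓ with h | h
    · subst h; simp at hkn
    · exact h
  have hkbl : k < b * ℓ := by omega
  have hkdb : k / ℓ < b := (Nat.div_lt_iff_lt_mul hℓ).2 hkbl
  have hkd1 : 1 ≤ k / ℓ := by
    rw [Nat.le_div_iff_mul_le hℓ]; omega
  constructor
  · rintro ⟨hnp, hloc⟩
    -- Step 1: onesCount x = b*ℓ - k
    have hones : onesCount x = b * ℓ - k := by
      by_contra hne
      rcases lt_or_gt_of_ne hne with hlt | hgt
      · -- onesCount x < b*ℓ - k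
        by_cases hall : ∀ i : Fin (b * ℓ), x i = false →
            ∃ j : Fin b, (i : ℕ) / ℓ = (j : ℕ) ∧ blockAllZeros b ℓ x j
        · -- Pareto optimal: sum argument
          apply hnp
          intro y hdom
          obtain ⟨hf1, hf2, hstrict⟩ := hdom
          have hxsum : oneJump (b * ℓ) k x + zeroRoyalRoad b ℓ x = b * ℓ + k := by
            have hle := zeros_le_of_all b ℓ hℓ x hall
            have hge := mul_card_zero_blocks_le b ℓ hℓ x
            have hoz := ones_add_zeros x
            rw [oneJump_le x (le_of_lt hlt)]
            unfold zeroRoyalRoad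
            omega
          have hy := sum_bound b ℓ k (by omega) hℓ hkn y
          omega
        · push_neg at hall
          obtain ⟨i, hxi, hnb⟩ := hall
          have hib : (i : ℕ) / ℓ < b := (Nat.div_lt_iff_lt_mul hℓ).2 i.isLt
          set j0 : Fin b := ⟨(i : ℕ) / ℓ, hib⟩ with hj0
          have hnb' : ¬ blockAllZeros b ℓ x j0 := fun h => hnb j0 rfl h
          set y := Function.update x i true with hy
          have hd1 : hammingDist y x = 1 := hammingDist_update x i true (by simp [hxi])
          apply hloc y hd1
          have hoy : onesCount y = onesCount x + 1 := onesCount_update_true x i hxi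
          refine ⟨?_, ?_, ?_⟩
          · rw [oneJump_le x (le_of_lt hlt), oneJump_le y (by omega)]; omega
          · rw [zrr_update_true b ℓ x i j0 rfl hnb']
          · left
            rw [oneJump_le x (le_of_lt hlt), oneJump_le y (by omega)]; omega
      · -- onesCount x > b*ℓ - k
        by_cases hx1 : x = fun _ => true
        · -- all-ones string is Pareto optimal
          apply hnp
          intro y hdom
          obtain ⟨hf1, hf2, hstrict⟩ := hdom
          by_cases hy1 : y = fun _ => true
          · subst hy1; rw [hx1] at hstrict; omega
          · have hxv : oneJump (b * ℓ) k x = k + b * ℓ := by rw [hx1]; exact oneJump_all_ones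
            have hyle : oneJump (b * ℓ) k y ≤ b * ℓ := by
              by_cases h2 : onesCount y ≤ b * ℓ - k
              · rw [oneJump_le y h2]; omega
              · rw [oneJump_gt y h2 hy1]; omega
            omega
        · -- flip a one-bit to zero: dominating neighbour
          have honesx_pos : 0 < onesCount x := by omega
          have hxne : x ≠ fun _ => true := hx1
          have honesxn : onesCount x < b * ℓ := by
            rcases Nat.lt_or_ge (onesCount x) (b * ℓ) with h | h
            · exact h
            · exact absurd ((onesCount_eq_n_iff x).mp
                (le_antisymm (onesCount_le x) h)) hx1
          have hex : ∃ i : Fin (b * ℓ), x i = true := by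
            by_contra hno
            push_neg at hno
            have : onesCount x = 0 := by
              unfold onesCount
              rw [Finset.card_eq_zero, Finset.filter_eq_empty_iff]
              intro i _
              exact hno i
            omega
          obtain ⟨i, hxi⟩ := hex
          set y := Function.update x i false with hy
          have hd1 : hammingDist y x = 1 := hammingDist_update x i false (by simp [hxi])
          apply hloc y hd1
          have hoy : onesCount x = onesCount y + 1 := onesCount_update_false x i hxi
          have hf2m : zeroRoyalRoad b ℓ x ≤ zeroRoyalRoad b ℓ y := by
            apply zrr_mono
            intro i' hi'
            by_cases hii : i' = i
            · subst hii; simp [hy, Function.update_self]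
            · rw [hy, Function.update_of_ne hii]; exact hi'
          have hyne : y ≠ fun _ => true := by
            intro h
            have := (onesCount_eq_n_iff y).mpr h
            omega
          have hf1x : oneJump (b * ℓ) k x = b * ℓ - onesCount x :=
            oneJump_gt x (by omega) hxne
          have hf1y : (b * ℓ) - onesCount x < oneJump (b * ℓ) k y := by
            by_cases h2 : onesCount y ≤ b * ℓ - k
            · rw [oneJump_le y h2]; omega
            · rw [oneJump_gt y h2 hyne]; omega
          exact ⟨by omega, hf2m, Or.inl (by omega)⟩
    -- Step 2: number of all-zero blocks < k/ℓ
    refine ⟨hones, ?_⟩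
    have hzx : zerosCount x = k := by have := ones_add_zeros x; omega
    have hzle : (Finset.univ.filter fun j : Fin b => blockAllZeros b ℓ x j).card ≤ k / ℓ := by
      rw [Nat.le_div_iff_mul_le hℓ]
      have := mul_card_zero_blocks_le b ℓ hℓ x
      rw [hzx, Nat.mul_comm] at this
      omega
    rcases lt_or_eq_of_le hzle with h | heq
    · exact h
    · -- z = k/ℓ : x is Pareto optimal, contradiction
      exfalso
      apply hnp
      intro y hdom
      obtain ⟨hf1, hf2, hstrict⟩ := hdom
      have hf1x : oneJump (b * ℓ) k x = k + (b * ℓ - k) := by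
        rw [oneJump_le x (le_of_eq hones), hones]
      have hf2x : zeroRoyalRoad b ℓ x = ℓ * (k / ℓ) := by
        unfold zeroRoyalRoad; rw [heq]
      by_cases hy1 : y = fun _ => true
      · subst hy1
        rw [zrr_all_ones b ℓ hℓ] at hf2
        have : ℓ * (k / ℓ) = 0 := by omega
        have : ℓ * (k / ℓ) ≥ ℓ * 1 := Nat.mul_le_mul_left ℓ hkd1
        omega
      · by_cases h2 : onesCount y ≤ b * ℓ - k
        · have hf1y : oneJump (b * ℓ) k y = k + onesCount y := oneJump_le y h2
          have hoy : onesCount y = b * ℓ - k := by omega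
          have hzy : zerosCount y = k := by have := ones_add_zeros y; omega
          have hf2y : zeroRoyalRoad b ℓ y ≤ ℓ * (k / ℓ) := by
            have h1 := mul_card_zero_blocks_le b ℓ hℓ y
            rw [hzy] at h1
            have h2' : (Finset.univ.filter fun j : Fin b =>
                blockAllZeros b ℓ y j).card ≤ k / ℓ := by
              rw [Nat.le_div_iff_mul_le hℓ]
              rw [Nat.mul_comm] at h1; omega
            unfold zeroRoyalRoad
            exact Nat.mul_le_mul_left ℓ h2'
          omega
        · have hf1y : oneJump (b * ℓ) k y = b * ℓ - onesCount y := oneJump_gt y h2 hy1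
          omega
  · rintro ⟨hones, hzlt⟩
    have hzx : zerosCount x = k := by have := ones_add_zeros x; omega
    constructor
    · -- not Pareto optimal: witness y0 = [k zeros then ones]
      intro hpo
      apply hpo (fun i => decide (k ≤ (i : ℕ)))
      have hy0z : zerosCount (fun i : Fin (b * ℓ) => decide (k ≤ (i : ℕ))) = k := by
        unfold zerosCount
        have hset : (Finset.univ.filter fun i : Fin (b * ℓ) =>
            (fun i : Fin (b * ℓ) => decide (k ≤ (i : ℕ))) i = false)
            = Finset.univ.filter fun i : Fin (b * ℓ) => (i : ℕ) < k := by
          ext i; simp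
        rw [hset, card_val_lt k (le_of_lt hkbl)]
      have hy0o : onesCount (fun i : Fin (b * ℓ) => decide (k ≤ (i : ℕ))) = b * ℓ - k := by
        have := ones_add_zeros (fun i : Fin (b * ℓ) => decide (k ≤ (i : ℕ)))
        omega
      have hy0b : (Finset.univ.filter fun j : Fin b =>
          blockAllZeros b ℓ (fun i : Fin (b * ℓ) => decide (k ≤ (i : ℕ))) j).card = k / ℓ := by
        have hset : (Finset.univ.filter fun j : Fin b =>
            blockAllZeros b ℓ (fun i : Fin (b * ℓ) => decide (k ≤ (i : ℕ))) j)
            = Finset.univ.filter fun j : Fin b => (j : ℕ) < k / ℓ := by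
          ext j
          simp only [Finset.mem_filter, Finset.mem_univ, true_and]
          constructor
          · intro h
            have hjb : ((j : ℕ) + 1) * ℓ ≤ b * ℓ := Nat.mul_le_mul_right ℓ j.isLt
            rw [Nat.succ_mul] at hjb
            have hi0 : ((j : ℕ) * ℓ + (ℓ - 1)) / ℓ = (j : ℕ) := by
              apply (div_eq_iff_block hℓ).2
              rw [Nat.succ_mul]; omega
            have := h ⟨(j : ℕ) * ℓ + (ℓ - 1), by omega⟩ hi0
            simp only [decide_eq_false_iff_not, not_le] at this
            have hjk : ((j : ℕ) + 1) * ℓ ≤ k := by rw [Nat.succ_mul]; omega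
            have := (Nat.le_div_iff_mul_le hℓ).2 hjk
            omega
          · intro hj i hi
            have hjk : ((j : ℕ) + 1) * ℓ ≤ k := by
              rw [← Nat.le_div_iff_mul_le hℓ]; omega
            have hilt : (i : ℕ) < ((j : ℕ) + 1) * ℓ := ((div_eq_iff_block hℓ).1 hi).2
            simp only [decide_eq_false_iff_not, not_le]
            omega
        rw [hset, card_val_lt (k / ℓ) (le_of_lt hkdb)]
      refine ⟨?_, ?_, ?_⟩
      · rw [oneJump_le x (le_of_eq hones), oneJump_le _ (le_of_eq hy0o), hy0o, hones]
      · unfold zeroRoyalRoad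
        rw [hy0b]
        exact Nat.mul_le_mul_left ℓ (le_of_lt hzlt)
      · right
        unfold zeroRoyalRoad
        rw [hy0b]
        exact (Nat.mul_lt_mul_left hℓ).2 hzlt
    · -- no Hamming-1 neighbour dominates
      intro y hd hdom
      obtain ⟨hf1, hf2, hstrict⟩ := hdom
      obtain ⟨i, hne, hupd⟩ := exists_update_of_hammingDist_one hd
      have hf1x : oneJump (b * ℓ) k x = k + (b * ℓ - k) := by
        rw [oneJump_le x (le_of_eq hones), hones]
      cases hxi : x i with
      | true =>
          have hyi : y i = false := by
            cases hyiv : y i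
            · rfl
            · exact absurd (hyiv.trans hxi.symm) hne
          have hoy : onesCount x = onesCount y + 1 := by
            rw [hupd, hyi]
            rw [hyi] at hupd
            exact onesCount_update_false x i hxi
          have hf1y : oneJump (b * ℓ) k y = k + onesCount y :=
            oneJump_le y (by omega)
          omega
      | false =>
          have hyi : y i = true := by
            cases hyiv : y i
            · exact absurd (hyiv.trans hxi.symm) hne
            · rfl
          have hoy : onesCount y = onesCount x + 1 := by
            rw [hupd, hyi]
            exact onesCount_update_true x i hxi
          have hyne : y ≠ fun _ => true := by
            intro h
            have := (onesCount_eq_n_iff y).mpr h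
            omega
          have hf1y : oneJump (b * ℓ) k y = b * ℓ - onesCount y :=
            oneJump_gt y (by omega) hyne
          omega
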